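/- (Theorem 3, Morse property) Let 0 < r_1 < r_2 < r_3. Every critical point of the perimeter L on the torus (ℝ/2πℤ)² (coordinates (α_1, α_2), with α_3 = 0) is nondegenerate, i.e. the Hessian matrix of L has nonzero determinant there; thus L is a Morse function. -/

import Mathlib

open Real

/-- Length of the chordal segment between points at radii `r`, `r'` whose polar angles
differ by `θ`. -/
noncomputable def ell (r r' θ : ℝ) : ℝ :=
  Real.sqrt (r ^ 2 + r' ^ 2 - 2 * r * r' * Real.cos θ)

/-- The perimeter of the connecting cycle for three concentric circles of radii
`r1, r2, r3`, as a function of the polar angles `a1, a2` of the first two vertices,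
the third angle being fixed to `0`. -/
noncomputable def L3 (r1 r2 r3 : ℝ) (a1 a2 : ℝ) : ℝ :=
  ell r1 r2 (a2 - a1) + ell r2 r3 (0 - a2) + ell r3 r1 (a1 - 0)

/-- Partial derivative in the first variable. -/
noncomputable def pd1 (f : ℝ → ℝ → ℝ) (a b : ℝ) : ℝ := deriv (fun x => f x b) a

/-- Partial derivative in the second variable. -/
noncomputable def pd2 (f : ℝ → ℝ → ℝ) (a b : ℝ) : ℝ := deriv (fun y => f a y) b

/-- The Hessian matrix of `L3 r1 r2 r3` at `(a, b)` in the reduced coordinates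
`(α₁, α₂)`. -/
noncomputable def hess3 (r1 r2 r3 a b : ℝ) : Matrix (Fin 2) (Fin 2) ℝ :=
  !![pd1 (pd1 (L3 r1 r2 r3)) a b, pd1 (pd2 (L3 r1 r2 r3)) a b;
     pd2 (pd1 (L3 r1 r2 r3)) a b, pd2 (pd2 (L3 r1 r2 r3)) a b]

/-!
At a critical point the three values `ellDeriv rᵢ rⱼ θₖ` coincide. Their common value `d` is the
signed distance from the origin to each side line, so all three sides touch the circle of radius
`|d|` about the origin. With the tangent lengths `tᵢ = √(rᵢ² - d²)`, each side has length
`tⱼ ∓ tᵢ` and `rᵢ rⱼ cos θₖ - d² = ± tᵢ tⱼ`, while its second derivative is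
`(rᵢ rⱼ cos θₖ - d²) / ℓₖ`. The Hessian determinant is the cyclic sum `h₁h₂ + h₂h₃ + h₃h₁` of these
second derivatives; running through the eight sign patterns, with the constraint that the three
angles sum to zero, shows that it never vanishes.
-/

/-- Geometrically, the signed distance from the origin to the line through the two points. -/
noncomputable def ellDeriv (r r' θ : ℝ) : ℝ := r * r' * sin θ / ell r r' θ

noncomputable def ellDeriv2 (r r' θ : ℝ) : ℝ := (r * r' * cos θ - ellDeriv r r' θ ^ 2) / ell r r' θ

section Chord

variable {r r' : ℝ}

lemma chord_sq_pos (hr : 0 < r) (hr' : 0 < r') (hne : r ≠ r') (θ : ℝ) :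
    0 < r ^ 2 + r' ^ 2 - 2 * r * r' * cos θ := by
  have : r - r' ≠ 0 := sub_ne_zero.2 hne
  have : 0 < (r - r') ^ 2 := by positivity
  nlinarith [cos_le_one θ, mul_pos hr hr']

lemma ell_pos (hr : 0 < r) (hr' : 0 < r') (hne : r ≠ r') (θ : ℝ) : 0 < ell r r' θ :=
  sqrt_pos.2 (chord_sq_pos hr hr' hne θ)

lemma sq_ell (hr : 0 < r) (hr' : 0 < r') (hne : r ≠ r') (θ : ℝ) :
    ell r r' θ ^ 2 = r ^ 2 + r' ^ 2 - 2 * r * r' * cos θ :=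
  sq_sqrt (chord_sq_pos hr hr' hne θ).le

lemma ell_comm (r r' θ : ℝ) : ell r r' θ = ell r' r θ := by
  unfold ell; ring_nf

lemma ellDeriv_comm (r r' θ : ℝ) : ellDeriv r r' θ = ellDeriv r' r θ := by
  rw [ellDeriv, ellDeriv, ell_comm, mul_comm r]

lemma ellDeriv2_comm (r r' θ : ℝ) : ellDeriv2 r r' θ = ellDeriv2 r' r θ := by
  rw [ellDeriv2, ellDeriv2, ell_comm, ellDeriv_comm, mul_comm r]

lemma hasDerivAt_ell (hr : 0 < r) (hr' : 0 < r') (hne : r ≠ r') (θ : ℝ) :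
    HasDerivAt (ell r r') (ellDeriv r r' θ) θ := by
  have hQ : HasDerivAt (fun t => r ^ 2 + r' ^ 2 - 2 * r * r' * cos t) (2 * r * r' * sin θ) θ := by
    simpa using ((hasDerivAt_cos θ).const_mul (2 * r * r')).const_sub (r ^ 2 + r' ^ 2)
  refine (hQ.sqrt (chord_sq_pos hr hr' hne θ).ne').congr_deriv ?_
  rw [ellDeriv, ell]
  field_simp

lemma hasDerivAt_ellDeriv (hr : 0 < r) (hr' : 0 < r') (hne : r ≠ r') (θ : ℝ) :
    HasDerivAt (ellDeriv r r') (ellDeriv2 r r' θ) θ := by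
  have hL := (ell_pos hr hr' hne θ).ne'
  refine (((hasDerivAt_sin θ).const_mul (r * r')).div (hasDerivAt_ell hr hr' hne θ)
    hL).congr_deriv ?_
  rw [ellDeriv2, ellDeriv]
  field_simp

end Chord

section Tangent

variable {r r' θ d : ℝ}

lemma mul_sin_eq_mul_ell (hr : 0 < r) (hr' : 0 < r') (hne : r ≠ r') (hd : ellDeriv r r' θ = d) :
    r * r' * sin θ = d * ell r r' θ := by
  rw [← hd, ellDeriv, div_mul_cancel₀ _ (ell_pos hr hr' hne θ).ne']

lemma sq_le_sq_of_ellDeriv_eq (hr : 0 < r) (hr' : 0 < r') (hne : r ≠ r')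
    (hd : ellDeriv r r' θ = d) : d ^ 2 ≤ r ^ 2 := by
  have hs := mul_sin_eq_mul_ell hr hr' hne hd
  have hL := ell_pos hr hr' hne θ
  have key : (r ^ 2 - d ^ 2) * ell r r' θ ^ 2 = (r ^ 2 - r * r' * cos θ) ^ 2 := by
    linear_combination r ^ 2 * sq_ell hr hr' hne θ - (r * r') ^ 2 * sin_sq_add_cos_sq θ
      + (r * r' * sin θ + d * ell r r' θ) * hs
  nlinarith [sq_nonneg (r ^ 2 - r * r' * cos θ), pow_pos hL 2]

lemma sq_mul_cos_sub_sq (hr : 0 < r) (hr' : 0 < r') (hne : r ≠ r') (hd : ellDeriv r r' θ = d) :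
    (r * r' * cos θ - d ^ 2) ^ 2 = (r ^ 2 - d ^ 2) * (r' ^ 2 - d ^ 2) := by
  linear_combination (r * r') ^ 2 * sin_sq_add_cos_sq θ - d ^ 2 * sq_ell hr hr' hne θ
    - (r * r' * sin θ + d * ell r r' θ) * mul_sin_eq_mul_ell hr hr' hne hd

lemma chord_tangent_cases (hr : 0 < r) (hrr' : r < r') (hd : ellDeriv r r' θ = d) :
    (r * r' * cos θ - d ^ 2 = √(r ^ 2 - d ^ 2) * √(r' ^ 2 - d ^ 2) ∧
        ell r r' θ = √(r' ^ 2 - d ^ 2) - √(r ^ 2 - d ^ 2)) ∨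
      (r * r' * cos θ - d ^ 2 = -(√(r ^ 2 - d ^ 2) * √(r' ^ 2 - d ^ 2)) ∧
        ell r r' θ = √(r' ^ 2 - d ^ 2) + √(r ^ 2 - d ^ 2)) := by
  have hr' : 0 < r' := hr.trans hrr'
  have hdr := sq_le_sq_of_ellDeriv_eq hr hr' hrr'.ne hd
  have hdr' : d ^ 2 ≤ r' ^ 2 := hdr.trans (pow_le_pow_left₀ hr.le hrr'.le 2)
  set t := √(r ^ 2 - d ^ 2)
  set t' := √(r' ^ 2 - d ^ 2)
  have ht : t ^ 2 = r ^ 2 - d ^ 2 := sq_sqrt (by linarith)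
  have ht' : t' ^ 2 = r' ^ 2 - d ^ 2 := sq_sqrt (by linarith)
  have htt' : t < t' := sqrt_lt_sqrt (by linarith) (by nlinarith)
  have hL := ell_pos hr hr' hrr'.ne θ
  have hLsq := sq_ell hr hr' hrr'.ne θ
  rcases sq_eq_sq_iff_eq_or_eq_neg.1 ((sq_mul_cos_sub_sq hr hr' hrr'.ne hd).trans
      (by rw [← ht, ← ht', mul_pow])) with he | he
  · refine .inl ⟨he, (pow_left_inj₀ hL.le (by linarith) two_ne_zero).1 ?_⟩
    linear_combination hLsq - 2 * he - ht - ht'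
  · refine .inr ⟨he, (pow_left_inj₀ hL.le (by positivity) two_ne_zero).1 ?_⟩
    linear_combination hLsq - 2 * he - ht - ht'

end Tangent

/-- The `tᵢ` are tangent lengths to the circle of radius `|d|` about the origin; `hcos` and `hsin`
are the real and imaginary parts of `(r₁r₂ e^{iθ₁}) (r₂r₃ e^{iθ₂}) = r₂² · r₁r₃ e^{-iθ₃}`. -/
lemma cyclic_sum_ne_zero {t1 t2 t3 d e1 e2 e3 L1 L2 L3 : ℝ}
    (ht1 : 0 ≤ t1) (ht12 : t1 < t2) (ht23 : t2 < t3) (hpos : 0 < d ^ 2 + t1 ^ 2)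
    (h1 : (e1 = t1 * t2 ∧ L1 = t2 - t1) ∨ (e1 = -(t1 * t2) ∧ L1 = t2 + t1))
    (h2 : (e2 = t2 * t3 ∧ L2 = t3 - t2) ∨ (e2 = -(t2 * t3) ∧ L2 = t3 + t2))
    (h3 : (e3 = t1 * t3 ∧ L3 = t3 - t1) ∨ (e3 = -(t1 * t3) ∧ L3 = t3 + t1))
    (hcos : (e1 + d ^ 2) * (e2 + d ^ 2) - d ^ 2 * L1 * L2 = (d ^ 2 + t2 ^ 2) * (e3 + d ^ 2))
    (hsin : d * ((e1 + d ^ 2) * L2 + L1 * (e2 + d ^ 2) + (d ^ 2 + t2 ^ 2) * L3) = 0) :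
    e1 * e2 * L3 + e2 * e3 * L1 + e3 * e1 * L2 ≠ 0 := by
  have ht2 : 0 < t2 := ht1.trans_lt ht12
  have ht3 : 0 < t3 := ht2.trans ht23
  -- the form in which `r₁ > 0`, i.e. `hpos`, enters the sign analysis below
  have key : 0 < d ^ 2 * (t2 + t3) + t1 * t2 * t3 := by
    rcases ht1.eq_or_lt with rfl | ht1
    · have : 0 < d ^ 2 := by simpa using hpos
      positivity
    · positivity
  rcases h1 with ⟨rfl, rfl⟩ | ⟨rfl, rfl⟩ <;> rcases h2 with ⟨rfl, rfl⟩ | ⟨rfl, rfl⟩ <;>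
    rcases h3 with ⟨rfl, rfl⟩ | ⟨rfl, rfl⟩ <;> rcases mul_eq_zero.1 hsin with rfl | hsin <;>
    intro hS <;>
    nlinarith [mul_pos ht2 ht3, mul_nonneg ht1 ht2.le, mul_nonneg ht1 ht3.le,
      mul_pos (mul_pos ht2 ht3) (sub_pos.2 ht12), mul_pos (mul_pos ht2 ht3) (sub_pos.2 ht23)]

lemma ellDeriv2_cyclic_sum_ne_zero {r1 r2 r3 θ1 θ2 θ3 d : ℝ} (h1 : 0 < r1) (h12 : r1 < r2)
    (h23 : r2 < r3) (hθ : θ1 + θ2 + θ3 = 0) (hd1 : ellDeriv r1 r2 θ1 = d)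
    (hd2 : ellDeriv r2 r3 θ2 = d) (hd3 : ellDeriv r3 r1 θ3 = d) :
    ellDeriv2 r1 r2 θ1 * ellDeriv2 r2 r3 θ2 + ellDeriv2 r2 r3 θ2 * ellDeriv2 r3 r1 θ3
      + ellDeriv2 r3 r1 θ3 * ellDeriv2 r1 r2 θ1 ≠ 0 := by
  have h2 : 0 < r2 := h1.trans h12
  have h13 : r1 < r3 := h12.trans h23
  rw [ellDeriv_comm] at hd3
  rw [ellDeriv2_comm r3, ellDeriv2, ellDeriv2, ellDeriv2, hd1, hd2, hd3]
  have hcos3 : cos θ3 = cos θ1 * cos θ2 - sin θ1 * sin θ2 := by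
    rw [show θ3 = -(θ1 + θ2) by linarith, cos_neg, cos_add]
  have hsin3 : sin θ3 = -(sin θ1 * cos θ2 + cos θ1 * sin θ2) := by
    rw [show θ3 = -(θ1 + θ2) by linarith, sin_neg, sin_add]
  have hs1 := mul_sin_eq_mul_ell h1 h2 h12.ne hd1
  have hs2 := mul_sin_eq_mul_ell h2 (h2.trans h23) h23.ne hd2
  have hs3 := mul_sin_eq_mul_ell h1 (h2.trans h23) h13.ne hd3
  have hdr1 := sq_le_sq_of_ellDeriv_eq h1 h2 h12.ne hd1
  have hr12 : r1 ^ 2 < r2 ^ 2 := by gcongr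
  have hr23 : r2 ^ 2 < r3 ^ 2 := by gcongr
  have ht1 : √(r1 ^ 2 - d ^ 2) ^ 2 = r1 ^ 2 - d ^ 2 := sq_sqrt (by linarith)
  have ht2 : √(r2 ^ 2 - d ^ 2) ^ 2 = r2 ^ 2 - d ^ 2 := sq_sqrt (by linarith)
  have hL1 := (ell_pos h1 h2 h12.ne θ1).ne'
  have hL2 := (ell_pos h2 (h2.trans h23) h23.ne θ2).ne'
  have hL3 := (ell_pos h1 (h2.trans h23) h13.ne θ3).ne'
  intro h
  refine cyclic_sum_ne_zero (d := d) (sqrt_nonneg _) (sqrt_lt_sqrt (by linarith) (by linarith))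
    (sqrt_lt_sqrt (by linarith) (by linarith)) (by rw [ht1, add_sub_cancel]; positivity)
    (chord_tangent_cases h1 h12 hd1) (chord_tangent_cases h2 h23 hd2)
    (chord_tangent_cases h1 h13 hd3) ?_ ?_ ?_
  · rw [ht2]
    linear_combination
      -(r1 * r2 ^ 2 * r3) * hcos3 + (r2 * r3 * sin θ2) * hs1 + d * ell r1 r2 θ1 * hs2
  · rw [ht2]
    linear_combination -(r1 * r2 * cos θ1) * hs2 - (r2 * r3 * cos θ2) * hs1 - r2 ^ 2 * hs3
      + r1 * r2 ^ 2 * r3 * hsin3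
  · field_simp at h
    linear_combination h

section Perimeter

variable {r1 r2 r3 : ℝ}

lemma hasDerivAt_L3_fst (h1 : 0 < r1) (h12 : r1 < r2) (h23 : r2 < r3) (a b : ℝ) :
    HasDerivAt (fun x => L3 r1 r2 r3 x b) (ellDeriv r3 r1 (a - 0) - ellDeriv r1 r2 (b - a)) a := by
  have h2 := h1.trans h12
  have hb := ((hasDerivAt_ell h1 h2 h12.ne (b - a)).comp_const_sub b a).add_const
    (ell r2 r3 (0 - b))
  have ha := (hasDerivAt_ell (h2.trans h23) h1 (h12.trans h23).ne' (a - 0)).comp_sub_const a 0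
  exact (hb.add ha).congr_deriv (by ring)

lemma hasDerivAt_L3_snd (h1 : 0 < r1) (h12 : r1 < r2) (h23 : r2 < r3) (a b : ℝ) :
    HasDerivAt (fun y => L3 r1 r2 r3 a y) (ellDeriv r1 r2 (b - a) - ellDeriv r2 r3 (0 - b)) b := by
  have h2 := h1.trans h12
  have hb := (hasDerivAt_ell h1 h2 h12.ne (b - a)).comp_sub_const b a
  have ha := (hasDerivAt_ell h2 (h2.trans h23) h23.ne (0 - b)).comp_const_sub 0 b
  exact ((hb.add ha).add_const (ell r3 r1 (a - 0))).congr_deriv (by ring)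

lemma pd1_L3 (h1 : 0 < r1) (h12 : r1 < r2) (h23 : r2 < r3) :
    pd1 (L3 r1 r2 r3) = fun a b => ellDeriv r3 r1 (a - 0) - ellDeriv r1 r2 (b - a) :=
  funext₂ fun a b => (hasDerivAt_L3_fst h1 h12 h23 a b).deriv

lemma pd2_L3 (h1 : 0 < r1) (h12 : r1 < r2) (h23 : r2 < r3) :
    pd2 (L3 r1 r2 r3) = fun a b => ellDeriv r1 r2 (b - a) - ellDeriv r2 r3 (0 - b) :=
  funext₂ fun a b => (hasDerivAt_L3_snd h1 h12 h23 a b).deriv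

lemma det_hess3 (h1 : 0 < r1) (h12 : r1 < r2) (h23 : r2 < r3) (a b : ℝ) :
    (hess3 r1 r2 r3 a b).det =
      ellDeriv2 r1 r2 (b - a) * ellDeriv2 r2 r3 (0 - b)
        + ellDeriv2 r2 r3 (0 - b) * ellDeriv2 r3 r1 (a - 0)
        + ellDeriv2 r3 r1 (a - 0) * ellDeriv2 r1 r2 (b - a) := by
  have h2 := h1.trans h12
  have h3 := h2.trans h23
  have d12 := hasDerivAt_ellDeriv h1 h2 h12.ne
  have d23 := hasDerivAt_ellDeriv h2 h3 h23.ne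
  have d31 := hasDerivAt_ellDeriv h3 h1 (h12.trans h23).ne'
  have h11 : pd1 (pd1 (L3 r1 r2 r3)) a b = ellDeriv2 r3 r1 (a - 0) + ellDeriv2 r1 r2 (b - a) := by
    rw [pd1_L3 h1 h12 h23]
    exact ((((d31 _).comp_sub_const a 0).sub ((d12 _).comp_const_sub b a)).congr_deriv
      (by ring)).deriv
  have h21 : pd2 (pd1 (L3 r1 r2 r3)) a b = -ellDeriv2 r1 r2 (b - a) := by
    rw [pd1_L3 h1 h12 h23]
    exact (((d12 _).comp_sub_const b a).const_sub _).deriv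
  have h12' : pd1 (pd2 (L3 r1 r2 r3)) a b = -ellDeriv2 r1 r2 (b - a) := by
    rw [pd2_L3 h1 h12 h23]
    exact (((d12 _).comp_const_sub b a).sub_const _).deriv
  have h22 : pd2 (pd2 (L3 r1 r2 r3)) a b = ellDeriv2 r1 r2 (b - a) + ellDeriv2 r2 r3 (0 - b) := by
    rw [pd2_L3 h1 h12 h23]
    exact ((((d12 _).comp_sub_const b a).sub ((d23 _).comp_const_sub 0 b)).congr_deriv
      (by ring)).deriv
  rw [hess3, Matrix.det_fin_two_of, h11, h12', h21, h22]
  ring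

end Perimeter

/-- Theorem 3, Morse property: for `0 < r1 < r2 < r3` every critical point of
the perimeter (as a `2π`-periodic function of `(α₁, α₂)`, `α₃ = 0`) is nondegenerate:
the Hessian determinant is nonzero there. Thus the perimeter is a Morse function. -/
theorem stmt_9 (r1 r2 r3 : ℝ) (h1 : 0 < r1) (h12 : r1 < r2) (h23 : r2 < r3) :
    ∀ a1 a2 : ℝ,
      deriv (fun t => L3 r1 r2 r3 t a2) a1 = 0 →
      deriv (fun t => L3 r1 r2 r3 a1 t) a2 = 0 →
      (hess3 r1 r2 r3 a1 a2).det ≠ 0 := by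
  intro a1 a2 hcrit1 hcrit2
  rw [(hasDerivAt_L3_fst h1 h12 h23 a1 a2).deriv, sub_eq_zero] at hcrit1
  rw [(hasDerivAt_L3_snd h1 h12 h23 a1 a2).deriv, sub_eq_zero] at hcrit2
  rw [det_hess3 h1 h12 h23]
  exact ellDeriv2_cyclic_sum_ne_zero h1 h12 h23 (by ring) rfl hcrit2.symm hcrit1
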